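/- If two graphs G₁ and G₂ are each generically rigid in R^d and share at least d vertices (|V(G₁) ∩ V(G₂)| ≥ d), then G₁ ∪ G₂ is generically rigid in R^d. -/

import Mathlib

/-!
Every infinitesimal isometry `x ↦ A x + b` (`A` skew) of `ℝ^d` lies in the kernel of the rigidity
matrix. If the points of `S` are placed so that only the zero isometry vanishes on them, the motions
that are trivial on `S` (and arbitrary off `S`) have exactly the dimension that the kernel has when
the rank is maximal, so a rigid graph on `S` has precisely these motions. For a generic placement
both `G₁` and `G₂` have maximal rank and the `d` shared vertices separate isometries, since each
condition is the nonvanishing of a polynomial. A motion of `G₁ ∪ G₂` is then trivial on `V₁` and on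
`V₂`, and the two isometries agree on `V₁ ∩ V₂`, hence coincide: the motion is trivial on
`V₁ ∪ V₂`, and the rank of the union is maximal.
-/

/-- The rigidity matrix of a framework in `ℝ^d`. -/
def rigidityMatrix {V E : Type*} [DecidableEq V] (d : ℕ)
    (ep : E → V × V) (p : V → Fin d → ℝ) : Matrix E (V × Fin d) ℝ :=
  fun e vk =>
    if vk.1 = (ep e).1 then p (ep e).1 vk.2 - p (ep e).2 vk.2
    else if vk.1 = (ep e).2 then p (ep e).2 vk.2 - p (ep e).1 vk.2
    else 0

/-- The maximal rank `S(n,d)` of a rigidity matrix on `n` vertices in `ℝ^d`. -/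
def rankBound (n d : ℕ) : ℕ :=
  if d + 2 ≤ n then n * d - (d + 1).choose 2 else n.choose 2

/-- A graph with edges `ep : E → V × V` and vertex set `Vs` is generically
rigid in `ℝ^d` if some (equivalently, any generic) placement of its vertices
attains the maximal rigidity-matrix rank `S(|Vs|, d)`. -/
def GenericallyRigidOn {V E : Type*} [Fintype V] [DecidableEq V] [Fintype E]
    (d : ℕ) (Vs : Finset V) (ep : E → V × V) : Prop :=
  ∃ p : V → Fin d → ℝ, (rigidityMatrix d ep p).rank = rankBound Vs.card d

open Module Matrix

namespace Matrix

variable {m n K : Type*} [Field K] [Fintype n]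

lemma rank_add_finrank_ker (A : Matrix m n K) :
    A.rank + finrank K (LinearMap.ker A.mulVecLin) = Fintype.card n := by
  rw [rank, LinearMap.finrank_range_add_finrank_ker, finrank_fintype_fun_eq_card]

lemma exists_linearIndependent_row_comp [Fintype m] {A : Matrix m n K} {r : ℕ} (h : r ≤ A.rank) :
    ∃ f : Fin r → m, LinearIndependent K (A.row ∘ f) := by
  obtain ⟨κ, a, ha, hspan, hli⟩ := exists_linearIndependent' K A.row
  have : Fintype κ := have := Finite.of_injective a ha; Fintype.ofFinite κ
  have hcard : Fintype.card (Fin r) ≤ Fintype.card κ := by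
    rwa [rank_eq_finrank_span_row, ← hspan, finrank_span_eq_card hli, ← Fintype.card_fin r] at h
  obtain ⟨e⟩ := Function.Embedding.nonempty_of_card_le hcard
  exact ⟨a ∘ e, hli.comp e e.injective⟩

lemma exists_submatrix_det_ne_zero_of_le_rank [Fintype m] {A : Matrix m n K} {r : ℕ}
    (h : r ≤ A.rank) : ∃ (f : Fin r → m) (g : Fin r → n), (A.submatrix f g).det ≠ 0 := by
  obtain ⟨f, hf⟩ := exists_linearIndependent_row_comp h
  have hB : r ≤ (A.submatrix f id)ᵀ.rank := by
    rw [rank_transpose, LinearIndependent.rank_matrix (M := A.submatrix f id) hf, Fintype.card_fin]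
  obtain ⟨g, hg⟩ := exists_linearIndependent_row_comp hB
  exact ⟨f, g, ((isUnit_iff_isUnit_det _).mp (linearIndependent_cols_iff_isUnit.mp hg)).ne_zero⟩

lemma le_rank_of_submatrix_det_ne_zero [DecidableEq n] (A : Matrix m n K) {r : ℕ}
    (f : Fin r → m) (g : Fin r → n) (h : (A.submatrix f g).det ≠ 0) : r ≤ A.rank := by
  simpa [rank_of_det_ne_zero h] using rank_submatrix_le A f g

end Matrix

lemma MvPolynomial.exists_eval_ne_zero {R σ : Type*} [CommRing R] [IsDomain R] [Infinite R]
    {g : MvPolynomial σ R} (hg : g ≠ 0) : ∃ x : σ → R, eval x g ≠ 0 := by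
  by_contra! h
  exact hg (MvPolynomial.funext fun x => by simpa using h x)

/-- Rank at least `r` is witnessed by a nonzero `r × r` minor, a polynomial in the entries. -/
lemma exists_ne_zero_forall_le_rank_map_eval {m n σ K : Type*} [Fintype m] [Fintype n]
    [DecidableEq n] [Field K] (P : Matrix m n (MvPolynomial σ K)) {r : ℕ} {x₀ : σ → K}
    (h : r ≤ (P.map (MvPolynomial.eval x₀)).rank) :
    ∃ g : MvPolynomial σ K, g ≠ 0 ∧
      ∀ x, MvPolynomial.eval x g ≠ 0 → r ≤ (P.map (MvPolynomial.eval x)).rank := by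
  obtain ⟨f, g, hfg⟩ := exists_submatrix_det_ne_zero_of_le_rank h
  have heval : ∀ x, MvPolynomial.eval x (P.submatrix f g).det
      = ((P.map (MvPolynomial.eval x)).submatrix f g).det := fun x =>
    RingHom.map_det _ _
  refine ⟨(P.submatrix f g).det, fun h0 => hfg ?_, fun x hx => ?_⟩
  · rw [← heval, h0, map_zero]
  · exact le_rank_of_submatrix_det_ne_zero _ f g (heval x ▸ hx)

lemma dotProduct_mulVec_self_of_transpose_eq_neg {R n : Type*} [CommRing R] [NoZeroDivisors R]
    [CharZero R] [Fintype n] {A : Matrix n n R} (hA : Aᵀ = -A) (x : n → R) :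
    x ⬝ᵥ (A *ᵥ x) = 0 := by
  have : x ⬝ᵥ (A *ᵥ x) = -(x ⬝ᵥ (A *ᵥ x)) := by
    conv_lhs => rw [dotProduct_mulVec, ← mulVec_transpose, hA, neg_mulVec, neg_dotProduct,
      dotProduct_comm]
  rwa [eq_neg_iff_add_eq_zero, add_self_eq_zero] at this

/-- Coordinates of an infinitesimal isometry of `ℝ^d`: the entries above the diagonal of a skew
matrix, and a translation vector. -/
abbrev MotionIdx (d : ℕ) := {q : Fin d × Fin d // q.1 < q.2} ⊕ Fin d

lemma card_motionIdx (d : ℕ) : Fintype.card (MotionIdx d) = (d + 1).choose 2 := by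
  rw [Fintype.card_sum, Fintype.card_subtype, Fintype.card_product_filter_lt, Fintype.card_fin,
    Nat.choose_succ_succ', Nat.choose_one_right, add_comm]

lemma rankBound_add_choose {m d : ℕ} (h : d ≤ m) : rankBound m d + (d + 1).choose 2 = m * d := by
  have hsucc : (d + 1).choose 2 = d.choose 2 + d := by
    rw [Nat.choose_succ_succ', Nat.choose_one_right, add_comm]
  have htwo : (d + 1).choose 2 * 2 = d * d + d := by
    have := Nat.add_one_mul_choose_eq d 1
    rw [Nat.choose_one_right] at this
    linarith
  unfold rankBound
  split_ifs with hm
  · have : (d + 1) * d ≤ m * d := Nat.mul_le_mul_right d (by omega)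
    have : d * d + d ≤ m * d := by linarith
    omega
  · obtain rfl | rfl : m = d ∨ m = d + 1 := by omega
    · omega
    · rw [add_mul, one_mul]; omega

section Motions

variable {R V : Type*} [CommRing R] {d : ℕ}

def elemSkew (q : {q : Fin d × Fin d // q.1 < q.2}) : Matrix (Fin d) (Fin d) R :=
  single q.1.1 q.1.2 1 - single q.1.2 q.1.1 1

def skewPart (c : MotionIdx d → R) : Matrix (Fin d) (Fin d) R :=
  ∑ q, c (.inl q) • elemSkew q

/-- Its columns span the trivial infinitesimal motions of the placement `p`. -/
def motionMatrix (p : V → Fin d → R) : Matrix (V × Fin d) (MotionIdx d) R :=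
  fun vk => Sum.elim (fun q => (elemSkew q *ᵥ p vk.1) vk.2) fun k => (1 : Matrix _ _ R) vk.2 k

lemma motionMatrix_mulVec (p : V → Fin d → R) (c : MotionIdx d → R) (v : V) (k : Fin d) :
    (motionMatrix p *ᵥ c) (v, k) = (skewPart c *ᵥ p v) k + c (.inr k) := by
  simp only [mulVec, dotProduct, motionMatrix, Fintype.sum_sum_type, Sum.elim_inl, Sum.elim_inr,
    one_apply, ite_mul, one_mul, zero_mul, Finset.sum_ite_eq, Finset.mem_univ, if_true, skewPart,
    Matrix.sum_apply, Matrix.smul_apply, smul_eq_mul, Finset.sum_mul]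
  rw [Finset.sum_comm]
  congr 1
  exact Finset.sum_congr rfl fun _ _ => Finset.sum_congr rfl fun _ _ => by ring

lemma motionMatrix_map {S : Type*} [CommRing S] (f : R →+* S) (p : V → Fin d → R) :
    (motionMatrix p).map f = motionMatrix fun v => f ∘ p v := by
  ext ⟨v, k⟩ (q | m)
  · simp [motionMatrix, elemSkew, mulVec, dotProduct, single_apply]
  · simp [motionMatrix, one_apply]

lemma transpose_skewPart (c : MotionIdx d → R) : (skewPart c)ᵀ = -skewPart c := by
  simp [skewPart, elemSkew, transpose_sum, smul_sub]

lemma skewPart_apply_self (c : MotionIdx d → R) (i : Fin d) : skewPart c i i = 0 := by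
  rw [skewPart, Matrix.sum_apply]
  refine Finset.sum_eq_zero fun q _ => ?_
  have : ¬(q.1.1 = i ∧ q.1.2 = i) := fun ⟨h₁, h₂⟩ => q.2.ne (h₁.trans h₂.symm)
  simp [elemSkew, this, and_comm]

lemma skewPart_apply_of_lt (c : MotionIdx d → R) {i j : Fin d} (h : i < j) :
    skewPart c i j = c (.inl ⟨(i, j), h⟩) := by
  rw [skewPart, Matrix.sum_apply, Finset.sum_eq_single ⟨(i, j), h⟩]
  · simp [elemSkew, h.ne]
  · rintro q - hq
    have h₁ : ¬(q.1.1 = i ∧ q.1.2 = j) := fun ⟨h₁, h₂⟩ => hq (Subtype.ext (Prod.ext h₁ h₂))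
    have h₂ : ¬(q.1.2 = i ∧ q.1.1 = j) := fun ⟨h₁, h₂⟩ => lt_asymm h (h₁ ▸ h₂ ▸ q.2)
    simp [elemSkew, h₁, h₂]
  · simp

end Motions

section TrivialMotions

variable {K V : Type*} [Field K] {d : ℕ}

def restrictToVertices (d : ℕ) (S : Finset V) : (V × Fin d → K) →ₗ[K] (S × Fin d → K) :=
  LinearMap.funLeft K K (Prod.map (↑) id)

lemma mem_ker_restrictToVertices {S : Finset V} {u : V × Fin d → K} :
    u ∈ LinearMap.ker (restrictToVertices d S) ↔ ∀ v ∈ S, ∀ k, u (v, k) = 0 := by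
  simp [restrictToVertices, funext_iff, LinearMap.funLeft_apply]

lemma finrank_ker_restrictToVertices [Fintype V] (S : Finset V) :
    finrank K (LinearMap.ker (restrictToVertices (K := K) d S)) + S.card * d =
      Fintype.card V * d := by
  have hsurj : LinearMap.range (restrictToVertices (K := K) d S) = ⊤ :=
    LinearMap.range_eq_top.mpr <| LinearMap.funLeft_surjective_of_injective _ _ _ <|
      Subtype.val_injective.prodMap Function.injective_id
  have := LinearMap.finrank_range_add_finrank_ker (restrictToVertices (K := K) d S)
  rw [hsurj, finrank_top, finrank_fintype_fun_eq_card, finrank_fintype_fun_eq_card] at this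
  simp only [Fintype.card_prod, Fintype.card_coe, Fintype.card_fin] at this
  omega

/-- Motions that are trivial on `S`, arbitrary elsewhere. -/
def trivialMotions (p : V → Fin d → K) (S : Finset V) : Submodule K (V × Fin d → K) :=
  LinearMap.range (motionMatrix p).mulVecLin ⊔ LinearMap.ker (restrictToVertices d S)

/-- Holds iff the points `p v` (`v ∈ S`) affinely span a subspace of dimension at least `d - 1`. -/
def SeparatesMotions (p : V → Fin d → K) (S : Finset V) : Prop :=
  ∀ c, (∀ v ∈ S, ∀ k, (motionMatrix p *ᵥ c) (v, k) = 0) → c = 0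

lemma SeparatesMotions.mono {p : V → Fin d → K} {S T : Finset V} (h : SeparatesMotions p S)
    (hST : S ⊆ T) : SeparatesMotions p T :=
  fun c hc => h c fun v hv => hc v (hST hv)

lemma separatesMotions_iff_card_le_rank {p : V → Fin d → K} {S : Finset V} :
    SeparatesMotions p S ↔
      Fintype.card (MotionIdx d) ≤
        ((motionMatrix p).submatrix (Prod.map ((↑) : S → V) id) id).rank := by
  set B := (motionMatrix p).submatrix (Prod.map ((↑) : S → V) id) id
  have hB : ∀ c x, (B *ᵥ c) x = (motionMatrix p *ᵥ c) (x.1, x.2) := fun _ _ => rfl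
  have hker : SeparatesMotions p S ↔ LinearMap.ker B.mulVecLin = ⊥ := by
    simp [LinearMap.ker_eq_bot', SeparatesMotions, funext_iff, hB]
  have := rank_add_finrank_ker B
  rw [hker, ← Submodule.finrank_eq_zero]
  omega

lemma finrank_trivialMotions [Fintype V] {p : V → Fin d → K} {S : Finset V}
    (h : SeparatesMotions p S) :
    finrank K (trivialMotions p S) + S.card * d = Fintype.card V * d + (d + 1).choose 2 := by
  have hinj : Function.Injective (motionMatrix p).mulVecLin := by
    refine (injective_iff_map_eq_zero _).mpr fun c hc => h c fun v _ k => ?_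
    simpa using congrFun hc (v, k)
  have hdisj :
      LinearMap.range (motionMatrix p).mulVecLin ⊓ LinearMap.ker (restrictToVertices d S) = ⊥ := by
    rw [eq_bot_iff]
    rintro _ ⟨⟨c, rfl⟩, hc⟩
    simp [h c (mem_ker_restrictToVertices.mp hc)]
  have hsum := Submodule.finrank_sup_add_finrank_inf_eq
    (LinearMap.range (motionMatrix p).mulVecLin) (LinearMap.ker (restrictToVertices (K := K) d S))
  rw [hdisj, finrank_bot, LinearMap.finrank_range_of_inj hinj, finrank_fintype_fun_eq_card,
    card_motionIdx] at hsum
  have := finrank_ker_restrictToVertices (K := K) (d := d) S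
  rw [trivialMotions]
  omega

/-- The isometries witnessing triviality on `S` and on `T` agree on `S ∩ T`, hence coincide. -/
lemma trivialMotions_inf_le [DecidableEq V] {p : V → Fin d → K} {S T : Finset V}
    (h : SeparatesMotions p (S ∩ T)) :
    trivialMotions p S ⊓ trivialMotions p T ≤ trivialMotions p (S ∪ T) := by
  rintro u ⟨hS, hT⟩
  obtain ⟨_, ⟨c₁, rfl⟩, w₁, hw₁, rfl⟩ := Submodule.mem_sup.mp hS
  obtain ⟨_, ⟨c₂, rfl⟩, w₂, hw₂, hu⟩ := Submodule.mem_sup.mp hT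
  rw [mem_ker_restrictToVertices] at hw₁ hw₂
  obtain rfl : c₁ = c₂ := by
    refine (sub_eq_zero.mp (h _ fun v hv k => ?_)).symm
    have := congrFun hu (v, k)
    simp_all [mulVec_sub]
  refine Submodule.mem_sup.mpr
    ⟨_, ⟨c₁, rfl⟩, w₁, mem_ker_restrictToVertices.mpr fun v hv k => ?_, rfl⟩
  rcases Finset.mem_union.mp hv with hv | hv
  · exact hw₁ v hv k
  · rw [← add_left_cancel (congrFun hu (v, k)), hw₂ v hv k]

/-- Place `d` vertices of `S` at the standard basis vectors. -/
lemma exists_separatesMotions [DecidableEq V] {S : Finset V} (h : d ≤ S.card) :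
    ∃ p : V → Fin d → K, SeparatesMotions p S := by
  obtain ⟨f⟩ : Nonempty (Fin d ↪ S) :=
    Function.Embedding.nonempty_of_card_le (by simpa using h)
  have hf : ∀ m k, ((f m : V) = f k) ↔ m = k := fun m k =>
    Subtype.coe_injective.eq_iff.trans f.injective.eq_iff
  set p : V → Fin d → K := fun v k => if v = f k then 1 else 0
  have hp : ∀ m, p (f m) = Pi.single m 1 := fun m => by
    ext k
    simp [p, hf, Pi.single_apply, eq_comm]
  refine ⟨p, fun c hc => ?_⟩
  have hcol : ∀ m k, skewPart c k m + c (.inr k) = 0 := fun m k => by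
    simpa [motionMatrix_mulVec, hp, mulVec_single_one] using hc (f m) (f m).2 k
  have htrans : ∀ k, c (.inr k) = 0 := fun k => by
    simpa [skewPart_apply_self] using hcol k k
  have hskew : ∀ q, c (.inl q) = 0 := fun q => by
    simpa [skewPart_apply_of_lt c q.2, htrans] using hcol q.1.2 q.1.1
  ext (q | k)
  · exact hskew q
  · exact htrans k

end TrivialMotions

section Rigidity

variable {V E : Type*} [DecidableEq V] {d : ℕ}

lemma rigidityMatrix_apply (ep : E → V × V) (p : V → Fin d → ℝ) (e : E) (v : V) (k : Fin d) :
    rigidityMatrix d ep p e (v, k) =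
      (if v = (ep e).1 then (p (ep e).1 - p (ep e).2) k else 0) -
        (if v = (ep e).2 then (p (ep e).1 - p (ep e).2) k else 0) := by
  simp only [rigidityMatrix]
  split_ifs <;> simp_all

lemma rigidityMatrix_mulVec [Fintype V] (ep : E → V × V) (p : V → Fin d → ℝ)
    (u : V × Fin d → ℝ) (e : E) :
    (rigidityMatrix d ep p *ᵥ u) e =
      (p (ep e).1 - p (ep e).2) ⬝ᵥ fun k => u ((ep e).1, k) - u ((ep e).2, k) := by
  simp [mulVec, dotProduct, Fintype.sum_prod_type, rigidityMatrix_apply, sub_mul, ite_mul, mul_sub,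
    Finset.sum_sub_distrib]

lemma ker_rigidityMatrix_sumElim [Fintype V] {E₁ E₂ : Type*} (ep₁ : E₁ → V × V)
    (ep₂ : E₂ → V × V) (p : V → Fin d → ℝ) :
    LinearMap.ker (rigidityMatrix d (Sum.elim ep₁ ep₂) p).mulVecLin =
      LinearMap.ker (rigidityMatrix d ep₁ p).mulVecLin ⊓
        LinearMap.ker (rigidityMatrix d ep₂ p).mulVecLin := by
  ext u
  simp [funext_iff, rigidityMatrix_mulVec]

lemma trivialMotions_le_ker [Fintype V] {ep : E → V × V} {S : Finset V}
    (hep : ∀ e, (ep e).1 ∈ S ∧ (ep e).2 ∈ S) (p : V → Fin d → ℝ) :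
    trivialMotions p S ≤ LinearMap.ker (rigidityMatrix d ep p).mulVecLin := by
  refine sup_le ?_ fun u hu => ?_
  · rintro _ ⟨c, rfl⟩
    ext e
    have : (fun k => (motionMatrix p *ᵥ c) ((ep e).1, k) - (motionMatrix p *ᵥ c) ((ep e).2, k)) =
        skewPart c *ᵥ (p (ep e).1 - p (ep e).2) := by
      ext k
      simp [motionMatrix_mulVec, mulVec_sub]
    rw [mulVecLin_apply, mulVecLin_apply, rigidityMatrix_mulVec, this,
      dotProduct_mulVec_self_of_transpose_eq_neg (transpose_skewPart c), Pi.zero_apply]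
  · rw [mem_ker_restrictToVertices] at hu
    ext e
    simp [rigidityMatrix_mulVec, hu _ (hep e).1, hu _ (hep e).2]

lemma ker_rigidityMatrix_eq_trivialMotions [Fintype V] [Fintype E] {ep : E → V × V}
    {S : Finset V} (hep : ∀ e, (ep e).1 ∈ S ∧ (ep e).2 ∈ S) {p : V → Fin d → ℝ}
    (hp : SeparatesMotions p S) (hS : d ≤ S.card)
    (hrank : rankBound S.card d ≤ (rigidityMatrix d ep p).rank) :
    LinearMap.ker (rigidityMatrix d ep p).mulVecLin = trivialMotions p S := by
  refine (Submodule.eq_of_le_of_finrank_le (trivialMotions_le_ker hep p) ?_).symm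
  have := rank_add_finrank_ker (rigidityMatrix d ep p)
  have := finrank_trivialMotions hp
  have := rankBound_add_choose hS
  simp only [Fintype.card_prod, Fintype.card_fin] at *
  omega

lemma rank_rigidityMatrix_eq_rankBound [Fintype V] [Fintype E] {ep : E → V × V}
    {S : Finset V} {p : V → Fin d → ℝ} (hp : SeparatesMotions p S) (hS : d ≤ S.card)
    (hker : LinearMap.ker (rigidityMatrix d ep p).mulVecLin = trivialMotions p S) :
    (rigidityMatrix d ep p).rank = rankBound S.card d := by
  have := rank_add_finrank_ker (rigidityMatrix d ep p)
  have := finrank_trivialMotions hp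
  have := rankBound_add_choose hS
  rw [hker] at *
  simp only [Fintype.card_prod, Fintype.card_fin] at *
  omega

end Rigidity

section Genericity

open MvPolynomial

variable {V : Type*} {d : ℕ}

/-- `rigidityMatrix` with the coordinates of the placement as indeterminates. -/
noncomputable def rigidityPoly [DecidableEq V] {E : Type*} (d : ℕ) (ep : E → V × V) :
    Matrix E (V × Fin d) (MvPolynomial (V × Fin d) ℝ) :=
  fun e vk =>
    if vk.1 = (ep e).1 then X ((ep e).1, vk.2) - X ((ep e).2, vk.2)
    else if vk.1 = (ep e).2 then X ((ep e).2, vk.2) - X ((ep e).1, vk.2)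
    else 0

lemma rigidityPoly_map_eval [DecidableEq V] {E : Type*} (ep : E → V × V) (x : V × Fin d → ℝ) :
    (rigidityPoly d ep).map (eval x) = rigidityMatrix d ep (Function.curry x) := by
  ext e vk
  simp only [rigidityPoly, rigidityMatrix, Matrix.map_apply]
  split_ifs <;> simp

lemma motionMatrix_X_map_eval (S : Finset V) (x : V × Fin d → ℝ) :
    ((motionMatrix fun v k => (X (v, k) : MvPolynomial (V × Fin d) ℝ)).submatrix
        (Prod.map ((↑) : S → V) id) id).map (eval x) =
      (motionMatrix (Function.curry x)).submatrix (Prod.map ((↑) : S → V) id) id := by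
  rw [← submatrix_map, motionMatrix_map]
  congr
  ext v k
  simp

/-- Each condition holds off the zero set of a nonzero polynomial, and the product of the three
polynomials does not vanish everywhere. -/
lemma exists_common_generic_placement [Fintype V] [DecidableEq V] {E₁ E₂ : Type*} [Fintype E₁]
    [Fintype E₂] {ep₁ : E₁ → V × V} {ep₂ : E₂ → V × V} {S : Finset V} {r₁ r₂ : ℕ}
    (h₁ : ∃ p, r₁ ≤ (rigidityMatrix d ep₁ p).rank) (h₂ : ∃ p, r₂ ≤ (rigidityMatrix d ep₂ p).rank)
    (hS : ∃ p : V → Fin d → ℝ, SeparatesMotions p S) :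
    ∃ p, r₁ ≤ (rigidityMatrix d ep₁ p).rank ∧ r₂ ≤ (rigidityMatrix d ep₂ p).rank ∧
      SeparatesMotions p S := by
  obtain ⟨p₁, hp₁⟩ := h₁
  obtain ⟨p₂, hp₂⟩ := h₂
  obtain ⟨p₃, hp₃⟩ := hS
  obtain ⟨g₁, hg₁, hx₁⟩ := exists_ne_zero_forall_le_rank_map_eval (rigidityPoly d ep₁) (r := r₁)
    (x₀ := Function.uncurry p₁) (by rwa [rigidityPoly_map_eval, Function.curry_uncurry])
  obtain ⟨g₂, hg₂, hx₂⟩ := exists_ne_zero_forall_le_rank_map_eval (rigidityPoly d ep₂) (r := r₂)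
    (x₀ := Function.uncurry p₂) (by rwa [rigidityPoly_map_eval, Function.curry_uncurry])
  obtain ⟨g₃, hg₃, hx₃⟩ := exists_ne_zero_forall_le_rank_map_eval _
    (r := Fintype.card (MotionIdx d)) (x₀ := Function.uncurry p₃)
    (by rwa [motionMatrix_X_map_eval, Function.curry_uncurry, ← separatesMotions_iff_card_le_rank])
  obtain ⟨x, hx⟩ := exists_eval_ne_zero (mul_ne_zero (mul_ne_zero hg₁ hg₂) hg₃)
  simp only [map_mul, mul_ne_zero_iff] at hx
  refine ⟨Function.curry x, ?_, ?_, ?_⟩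
  · exact rigidityPoly_map_eval ep₁ x ▸ hx₁ x hx.1.1
  · exact rigidityPoly_map_eval ep₂ x ▸ hx₂ x hx.1.2
  · exact separatesMotions_iff_card_le_rank.mpr (motionMatrix_X_map_eval S x ▸ hx₃ x hx.2)

end Genericity

/-- Gluing lemma: if `G₁` and `G₂` are generically rigid in `ℝ^d` and share at
least `d` vertices, then `G₁ ∪ G₂` is generically rigid in `ℝ^d`. -/
theorem genericallyRigid_union {V E₁ E₂ : Type*}
    [Fintype V] [DecidableEq V] [Fintype E₁] [Fintype E₂]
    (d : ℕ) (V₁ V₂ : Finset V)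
    (ep₁ : E₁ → V × V) (hep₁ : ∀ e, (ep₁ e).1 ∈ V₁ ∧ (ep₁ e).2 ∈ V₁)
    (ep₂ : E₂ → V × V) (hep₂ : ∀ e, (ep₂ e).1 ∈ V₂ ∧ (ep₂ e).2 ∈ V₂)
    (hshare : d ≤ (V₁ ∩ V₂).card)
    (h₁ : GenericallyRigidOn d V₁ ep₁) (h₂ : GenericallyRigidOn d V₂ ep₂) :
    GenericallyRigidOn d (V₁ ∪ V₂) (Sum.elim ep₁ ep₂) := by
  obtain ⟨p, hr₁, hr₂, hp⟩ := exists_common_generic_placement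
    (h₁.imp fun _ h => h.ge) (h₂.imp fun _ h => h.ge) (exists_separatesMotions hshare)
  have hI₁ : V₁ ∩ V₂ ⊆ V₁ := Finset.inter_subset_left
  have hI₂ : V₁ ∩ V₂ ⊆ V₂ := Finset.inter_subset_right
  have hIU : V₁ ∩ V₂ ⊆ V₁ ∪ V₂ := hI₁.trans Finset.subset_union_left
  have hd : ∀ {S}, V₁ ∩ V₂ ⊆ S → d ≤ S.card := fun h => hshare.trans (Finset.card_le_card h)
  have hepU : ∀ e, (Sum.elim ep₁ ep₂ e).1 ∈ V₁ ∪ V₂ ∧ (Sum.elim ep₁ ep₂ e).2 ∈ V₁ ∪ V₂ := by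
    rintro (e | e)
    · exact (hep₁ e).imp (Finset.mem_union_left _) (Finset.mem_union_left _)
    · exact (hep₂ e).imp (Finset.mem_union_right _) (Finset.mem_union_right _)
  refine ⟨p, rank_rigidityMatrix_eq_rankBound (hp.mono hIU) (hd hIU) ?_⟩
  refine le_antisymm ?_ (trivialMotions_le_ker hepU p)
  rw [ker_rigidityMatrix_sumElim,
    ker_rigidityMatrix_eq_trivialMotions hep₁ (hp.mono hI₁) (hd hI₁) hr₁,
    ker_rigidityMatrix_eq_trivialMotions hep₂ (hp.mono hI₂) (hd hI₂) hr₂]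
  exact trivialMotions_inf_le hp
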